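/- arXiv:math/0212056 — 6 statements merged into one kernel-verified Lean document; each statement's English description precedes it below -/
import Mathlib

section
/- In Definition of a partial action of a group G on a set X (with D_1 = X, α_1 = id, D_{(gh)^{-1}} ⊇ α_h^{-1}(D_h ∩ D_{g^{-1}}), and α_g ∘ α_h = α_{gh} on α_h^{-1}(D_h ∩ D_{g^{-1}})), the inclusion condition can be strengthened to an equality: α_h^{-1}(D_h ∩ D_{g^{-1}}) = D_{h^{-1}} ∩ D_{h^{-1}g^{-1}} for all g, h in G. In particular α_g(D_{g^{-1}} ∩ D_h) = D_g ∩ D_{gh}. -/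
/-- A partial action of a group `G` on a set `X`: subsets `D g ⊆ X` and
bijections `act g : D g⁻¹ → D g` (encoded as total maps that are bijective
from `D g⁻¹` onto `D g`) satisfying (i) `D 1 = X`, `act 1 = id`,
(ii) `α_h⁻¹(D h ∩ D g⁻¹) ⊆ D (gh)⁻¹`, (iii) `α_g ∘ α_h = α_{gh}` on that set. -/
structure SetPartialAction (G : Type*) [Group G] (X : Type*) where
  D : G → Set X
  act : G → X → X
  D_one : D 1 = Set.univ
  act_one : ∀ x : X, act 1 x = x
  bijOn : ∀ g : G, Set.BijOn (act g) (D g⁻¹) (D g)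
  incl : ∀ g h : G,
    (D h⁻¹ ∩ act h ⁻¹' (D h ∩ D g⁻¹)) ⊆ D (g * h)⁻¹
  comp : ∀ g h : G, ∀ x ∈ D h⁻¹ ∩ act h ⁻¹' (D h ∩ D g⁻¹),
    act g (act h x) = act (g * h) x

lemma SetPartialAction.act_mem {G X : Type*} [Group G] (α : SetPartialAction G X)
    (h : G) {x : X} (hx : x ∈ α.D h⁻¹) : α.act h x ∈ α.D h :=
  (α.bijOn h).mapsTo hx

lemma SetPartialAction.act_inv_act {G X : Type*} [Group G] (α : SetPartialAction G X)
    (h : G) {x : X} (hx : x ∈ α.D h⁻¹) : α.act h⁻¹ (α.act h x) = x := by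
  have hmem : x ∈ α.D h⁻¹ ∩ α.act h ⁻¹' (α.D h ∩ α.D h⁻¹⁻¹) := by
    refine ⟨hx, α.act_mem h hx, ?_⟩
    rw [inv_inv]; exact α.act_mem h hx
  have := α.comp h⁻¹ h x hmem
  rw [inv_mul_cancel] at this
  rw [this, α.act_one]

/-- The inclusion condition (ii) in the definition of a partial action can be
strengthened to an equality: `α_h⁻¹(D h ∩ D g⁻¹) = D h⁻¹ ∩ D (h⁻¹ g⁻¹)`; in
particular `α_g (D g⁻¹ ∩ D h) = D g ∩ D (g h)`. -/
theorem setPartialAction_incl_eq {G X : Type*} [Group G]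
    (α : SetPartialAction G X) :
    (∀ g h : G,
      α.D h⁻¹ ∩ α.act h ⁻¹' (α.D h ∩ α.D g⁻¹) = α.D h⁻¹ ∩ α.D (h⁻¹ * g⁻¹)) ∧
    (∀ g h : G, α.act g '' (α.D g⁻¹ ∩ α.D h) = α.D g ∩ α.D (g * h)) := by
  have key : ∀ g h : G,
      α.D h⁻¹ ∩ α.act h ⁻¹' (α.D h ∩ α.D g⁻¹) = α.D h⁻¹ ∩ α.D (h⁻¹ * g⁻¹) := by
    intro g h
    apply Set.Subset.antisymm
    · intro x hx
      refine ⟨hx.1, ?_⟩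
      have := α.incl g h hx
      rwa [mul_inv_rev] at this
    · rintro x ⟨hx1, hx2⟩
      refine ⟨hx1, α.act_mem h hx1, ?_⟩
      -- show α.act h x ∈ α.D g⁻¹ using incl with (g h⁻¹, h⁻¹)
      have hmem : α.act h x ∈ α.D h⁻¹⁻¹ ∩ α.act h⁻¹ ⁻¹' (α.D h⁻¹ ∩ α.D (g * h)⁻¹) := by
        constructor
        · rw [inv_inv]; exact α.act_mem h hx1
        · rw [Set.mem_preimage, α.act_inv_act h hx1]
          exact ⟨hx1, by rwa [mul_inv_rev]⟩
      have := α.incl (g * h) h⁻¹ hmem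
      rwa [mul_inv_cancel_right] at this
  refine ⟨key, fun g h => ?_⟩
  have h1 : α.D g⁻¹ ∩ α.D h = α.D g⁻¹ ∩ α.act g ⁻¹' (α.D g ∩ α.D (g * h)) := by
    have := key (g * h)⁻¹ g
    rw [inv_inv, ← mul_assoc, inv_mul_cancel, one_mul] at this
    exact this.symm
  rw [h1, Set.image_inter_preimage, (α.bijOn g).image_eq]
  rw [← Set.inter_assoc, Set.inter_self]
end

section
/- If I is a non-degenerate algebra (i.e., for every nonzero a ∈ I there exists b ∈ I with ab ≠ 0 or ba ≠ 0), then I is (L,R)-associative: for any two multipliers (L,R) and (L',R') of I, one has R' ∘ L = L ∘ R'. -/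
variable (K : Type*) [Field K] (I : Type*) [NonUnitalRing I] [Module K I]
  [SMulCommClass K I I] [IsScalarTower K I I]

/-- A multiplier of a (non-unital) `K`-algebra `I`: a pair `(L, R)` of linear
endomorphisms of `I` with `L (a*b) = L a * b`, `R (a*b) = a * R b` and
`R a * b = a * L b`. -/
structure Multiplier where
  L : I →ₗ[K] I
  R : I →ₗ[K] I
  L_mul : ∀ a b : I, L (a * b) = L a * b
  R_mul : ∀ a b : I, R (a * b) = a * R b
  cross : ∀ a b : I, R a * b = a * L b

namespace Multiplier

variable {K I}

@[ext] theorem ext {m n : Multiplier K I} (hL : m.L = n.L) (hR : m.R = n.R) :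
    m = n := by cases m; cases n; simp_all

instance : One (Multiplier K I) :=
  ⟨⟨LinearMap.id, LinearMap.id, fun _ _ => rfl, fun _ _ => rfl, fun _ _ => rfl⟩⟩

instance : Mul (Multiplier K I) :=
  ⟨fun m n =>
    { L := m.L ∘ₗ n.L
      R := n.R ∘ₗ m.R
      L_mul := fun a b => by simp [m.L_mul, n.L_mul]
      R_mul := fun a b => by simp [m.R_mul, n.R_mul]
      cross := fun a b => by simp [n.cross, m.cross] }⟩

instance : Add (Multiplier K I) :=
  ⟨fun m n =>
    { L := m.L + n.L
      R := m.R + n.R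
      L_mul := fun a b => by simp [m.L_mul, n.L_mul, add_mul]
      R_mul := fun a b => by simp [m.R_mul, n.R_mul, mul_add]
      cross := fun a b => by simp [m.cross, n.cross, add_mul, mul_add] }⟩

instance : Zero (Multiplier K I) :=
  ⟨{ L := 0, R := 0
     L_mul := fun a b => by simp
     R_mul := fun a b => by simp
     cross := fun a b => by simp }⟩

instance : Neg (Multiplier K I) :=
  ⟨fun m =>
    { L := -m.L
      R := -m.R
      L_mul := fun a b => by simp [m.L_mul]
      R_mul := fun a b => by simp [m.R_mul]
      cross := fun a b => by simp [m.cross] }⟩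

instance : SMul K (Multiplier K I) :=
  ⟨fun k m =>
    { L := k • m.L
      R := k • m.R
      L_mul := fun a b => by simp [m.L_mul, smul_mul_assoc]
      R_mul := fun a b => by simp [m.R_mul, mul_smul_comm]
      cross := fun a b => by simp [m.cross, smul_mul_assoc, mul_smul_comm] }⟩

end Multiplier

variable {K : Type*} [Field K] {I : Type*} [NonUnitalRing I] [Module K I]
  [SMulCommClass K I I] [IsScalarTower K I I]

/-- If `I` is non-degenerate then `I` is (L,R)-associative: for any two
multipliers `(L,R)` and `(L',R')` one has `R' ∘ L = L ∘ R'`. -/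
theorem nondegenerate_LR_associative
    (hnd : ∀ a : I, a ≠ 0 → ∃ b : I, a * b ≠ 0 ∨ b * a ≠ 0)
    (m m' : Multiplier K I) : ∀ a : I, m'.R (m.L a) = m.L (m'.R a) := by
  intro a
  set c := m'.R (m.L a) - m.L (m'.R a) with hc
  by_contra h
  have hc0 : c ≠ 0 := fun h0 => h (by simpa [hc, sub_eq_zero] using h0)
  obtain ⟨b, hb⟩ := hnd c hc0
  have h1 : c * b = 0 := by
    have : m'.R (m.L a) * b = m.L (m'.R a) * b := by
      rw [m'.cross, ← m.L_mul, ← m'.cross, m.L_mul]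
    simp [hc, sub_mul, this]
  have h2 : b * c = 0 := by
    have : b * m'.R (m.L a) = b * m.L (m'.R a) := by
      rw [← m'.R_mul, ← m.cross, m'.R_mul, m.cross]
    simp [hc, mul_sub, this]
  rcases hb with hb | hb
  · exact hb h1
  · exact hb h2
end

section
/- If I is an idempotent algebra (I² = I, i.e., every element is a sum of products), then I is (L,R)-associative: for any two multipliers (L,R) and (L',R') of I, R' ∘ L = L ∘ R'. -/
variable (K : Type*) [Field K] (I : Type*) [NonUnitalRing I] [Module K I]
  [SMulCommClass K I I] [IsScalarTower K I I]

variable {K : Type*} [Field K] {I : Type*} [NonUnitalRing I] [Module K I]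
  [SMulCommClass K I I] [IsScalarTower K I I]

/-- If `I` is idempotent (every element is a sum of products) then `I` is
(L,R)-associative: for any two multipliers `(L,R)` and `(L',R')` one has
`R' ∘ L = L ∘ R'`. -/
theorem idempotent_LR_associative
    (hid : ∀ x : I, x ∈ Submodule.span K {y : I | ∃ a b : I, y = a * b})
    (m m' : Multiplier K I) : ∀ a : I, m'.R (m.L a) = m.L (m'.R a) := by
  intro a
  induction hid a using Submodule.span_induction with
  | mem x hx =>
    obtain ⟨u, v, rfl⟩ := hx
    rw [m.L_mul, m'.R_mul, m'.R_mul, m.L_mul]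
  | zero => simp
  | add x y _ _ hx hy => simp [hx, hy]
  | smul k x _ hx => simp [hx]
end

section
/- If A is a unital semiprime algebra, then every ideal of A is (L,R)-associative. -/
/-- A (two-sided) ideal of a `K`-algebra, as a subset. -/
def IsIdealSet (K : Type*) [Field K] {A : Type*} [NonUnitalRing A]
    [Module K A] (S : Set A) : Prop :=
  0 ∈ S ∧ (∀ a ∈ S, ∀ b ∈ S, a + b ∈ S) ∧ (∀ (k : K), ∀ a ∈ S, k • a ∈ S) ∧
  (∀ a ∈ S, ∀ b : A, a * b ∈ S ∧ b * a ∈ S)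

/-- A pair `(L, R)` of maps is a multiplier of the subalgebra `S`:
`L, R` map `S` to `S`, are `K`-linear on `S`, and satisfy `L(ab) = L(a)b`,
`R(ab) = aR(b)`, `R(a)b = aL(b)` for `a, b ∈ S`. -/
def IsMultiplierOn (K : Type*) [Field K] {A : Type*} [NonUnitalRing A]
    [Module K A] (S : Set A) (L R : A → A) : Prop :=
  Set.MapsTo L S S ∧ Set.MapsTo R S S ∧
  (∀ a ∈ S, ∀ b ∈ S, L (a + b) = L a + L b ∧ R (a + b) = R a + R b) ∧
  (∀ (k : K), ∀ a ∈ S, L (k • a) = k • L a ∧ R (k • a) = k • R a) ∧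
  (∀ a ∈ S, ∀ b ∈ S, L (a * b) = L a * b ∧ R (a * b) = a * R b ∧
    R a * b = a * L b)

/-- An ideal `S` is nilpotent if `Sⁿ = 0` for some `n ≥ 1`. -/
def IsNilpotentIdealSet {A : Type*} [Ring A] (S : Set A) : Prop :=
  ∃ n : ℕ, 1 ≤ n ∧ ∀ l : List A, (∀ x ∈ l, x ∈ S) → l.length = n → l.prod = 0

/-- If `A` is a unital semiprime algebra then every ideal of `A` is
(L,R)-associative: any two multipliers `(L,R)`, `(L',R')` of the ideal
satisfy `R' ∘ L = L ∘ R'` on the ideal. -/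
theorem semiprime_ideals_LR_associative (K : Type*) [Field K] (A : Type*)
    [Ring A] [Algebra K A]
    (hsp : ¬∃ S : Set A, IsIdealSet K S ∧ S ≠ {0} ∧ IsNilpotentIdealSet S) :
    ∀ S : Set A, IsIdealSet K S → ∀ L R L' R' : A → A,
      IsMultiplierOn K S L R → IsMultiplierOn K S L' R' →
      ∀ a ∈ S, R' (L a) = L (R' a) := by
  intro S hS L R L' R' hM hM' a ha
  obtain ⟨hLS, hRS, hadd, hsmulM, hmul⟩ := hM
  obtain ⟨hLS', hRS', hadd', hsmulM', hmul'⟩ := hM'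
  obtain ⟨h0, haddS, hsmulS, hmulS⟩ := hS
  set c := R' (L a) - L (R' a) with hc
  rw [← sub_eq_zero]
  by_contra hcne
  have hLa : L a ∈ S := hLS ha
  have hRa' : R' a ∈ S := hRS' ha
  have hp : R' (L a) ∈ S := hRS' hLa
  have hq : L (R' a) ∈ S := hLS hRa'
  have hcS : c ∈ S := by
    have hrw : c = R' (L a) + (-1 : K) • (L (R' a)) := by
      rw [neg_one_smul, ← sub_eq_add_neg]
    rw [hrw]
    exact haddS _ hp _ (hsmulS _ _ hq)
  have hcb : ∀ b ∈ S, c * b = 0 := by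
    intro b hb
    have h1 : R' (L a) * b = L a * L' b := (hmul' _ hLa _ hb).2.2
    have h2 : L (R' a) * b = L a * L' b := by
      have e1 : L (R' a * b) = L (R' a) * b := (hmul _ hRa' _ hb).1
      have e2 : R' a * b = a * L' b := (hmul' _ ha _ hb).2.2
      have e3 : L (a * L' b) = L a * L' b := (hmul _ ha _ (hLS' hb)).1
      rw [← e1, e2, e3]
    rw [hc, sub_mul, h1, h2, sub_self]
  have hcac : ∀ x : A, c * x * c = 0 := fun x => by
    rw [mul_assoc]; exact hcb _ ((hmulS c hcS x).2)
  set G : Set A := {z | ∃ x y : A, z = x * c * y} with hG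
  set T : Submodule K A := Submodule.span K G with hT
  have hgen : ∀ x y : A, x * c * y ∈ T := fun x y => Submodule.subset_span ⟨x, y, rfl⟩
  have hcT : c ∈ T := by simpa using hgen 1 1
  have hmulTr : ∀ t ∈ T, ∀ b : A, t * b ∈ T := by
    intro t ht b
    refine Submodule.span_induction ?_ ?_ ?_ ?_ ht
    · rintro z ⟨x, y, rfl⟩
      have : x * c * y * b = x * c * (y * b) := by rw [mul_assoc]
      rw [this]; exact hgen x (y * b)
    · simp only [zero_mul, mul_zero]; exact T.zero_mem
    · intro u v _ _ hu hv
      rw [add_mul]; exact T.add_mem hu hv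
    · intro k u _ hu
      rw [smul_mul_assoc]; exact T.smul_mem k hu
  have hmulTl : ∀ t ∈ T, ∀ b : A, b * t ∈ T := by
    intro t ht b
    refine Submodule.span_induction ?_ ?_ ?_ ?_ ht
    · rintro z ⟨x, y, rfl⟩
      have : b * (x * c * y) = (b * x) * c * y := by rw [← mul_assoc, ← mul_assoc]
      rw [this]; exact hgen (b * x) y
    · simp only [zero_mul, mul_zero]; exact T.zero_mem
    · intro u v _ _ hu hv
      rw [mul_add]; exact T.add_mem hu hv
    · intro k u _ hu
      rw [mul_smul_comm]; exact T.smul_mem k hu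
  have hgenT : ∀ x y : A, ∀ t ∈ T, (x * c * y) * t = 0 := by
    intro x y t ht
    refine Submodule.span_induction ?_ ?_ ?_ ?_ ht
    · rintro z ⟨x', y', rfl⟩
      have key : c * (y * x') * c = 0 := hcac (y * x')
      calc (x * c * y) * (x' * c * y') = x * (c * (y * x') * c) * y' := by
            simp only [mul_assoc]
        _ = 0 := by rw [key, mul_zero, zero_mul]
    · rw [mul_zero]
    · intro u v _ _ hu hv
      rw [mul_add, hu, hv, add_zero]
    · intro k u _ hu
      rw [mul_smul_comm, hu, smul_zero]
  have hTT : ∀ t ∈ T, ∀ t' ∈ T, t * t' = 0 := by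
    intro t ht
    refine Submodule.span_induction ?_ ?_ ?_ ?_ ht
    · rintro z ⟨x, y, rfl⟩ t' ht'
      exact hgenT x y t' ht'
    · intro t' _; rw [zero_mul]
    · intro u v _ _ hu hv t' ht'
      rw [add_mul, hu t' ht', hv t' ht', add_zero]
    · intro k u _ hu t' ht'
      rw [smul_mul_assoc, hu t' ht', smul_zero]
  apply hsp
  refine ⟨(T : Set A), ⟨T.zero_mem, fun u hu v hv => T.add_mem hu hv,
    fun k u hu => T.smul_mem k hu, fun u hu b => ⟨hmulTr u hu b, hmulTl u hu b⟩⟩, ?_, ?_⟩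
  · intro h
    apply hcne
    have : c ∈ ({0} : Set A) := h ▸ hcT
    simpa using this
  · refine ⟨2, by norm_num, fun l hl hlen => ?_⟩
    obtain ⟨x, y, rfl⟩ := List.length_eq_two.mp hlen
    have hx : x ∈ T := hl x (by simp)
    have hy : y ∈ T := hl y (by simp)
    simp [hTT x hx y hy]
end

section
/- Let α be a partial action of a group G on a unital algebra A. Then α admits an enveloping action β (a global action of G on an algebra B containing an isomorphic copy of A as an ideal, restricting to α, with B generated by ∪_g β_g(A)) if and only if each ideal D_g (g ∈ G) is a unital algebra, i.e., D_g = 1_g·A for a central idempotent 1_g of A. Moreover the enveloping action, when it exists, is unique up to equivalence. -/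
/-- A partial action `α` of a group `G` on a `K`-algebra `A`: ideals `D g`
(with `D 1 = A`) and algebra isomorphisms `act g : D g⁻¹ → D g` (encoded as
total maps, bijective from `D g⁻¹` onto `D g` and multiplicative/linear
there), with `act 1 = id`, `act g (D g⁻¹ ∩ D h) = D g ∩ D (gh)` and
`act g ∘ act h = act (gh)` on `D h⁻¹ ∩ D (gh)⁻¹`. -/
structure AlgPartialAction (K : Type*) [Field K] (G : Type*) [Group G]
    (A : Type*) [NonUnitalRing A] [Module K A] where
  D : G → Set A
  isIdeal : ∀ g : G, IsIdealSet K (D g)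
  act : G → A → A
  D_one : D 1 = Set.univ
  act_one : ∀ a : A, act 1 a = a
  bijOn : ∀ g : G, Set.BijOn (act g) (D g⁻¹) (D g)
  act_add : ∀ g : G, ∀ a ∈ D g⁻¹, ∀ b ∈ D g⁻¹, act g (a + b) = act g a + act g b
  act_smul : ∀ g : G, ∀ (k : K), ∀ a ∈ D g⁻¹, act g (k • a) = k • act g a
  act_mul : ∀ g : G, ∀ a ∈ D g⁻¹, ∀ b ∈ D g⁻¹, act g (a * b) = act g a * act g b
  act_image : ∀ g h : G, act g '' (D g⁻¹ ∩ D h) = D g ∩ D (g * h)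
  act_comp : ∀ g h : G, ∀ a ∈ D h⁻¹ ∩ D (g * h)⁻¹, act g (act h a) = act (g * h) a

/-- The coefficient of the product of two simple elements of the skew group
ring: `(a δ_g) (b δ_h) = (α_g (α_{g⁻¹}(a) b)) δ_{gh}`. -/
def AlgPartialAction.p {K : Type*} [Field K] {G : Type*} [Group G]
    {A : Type*} [NonUnitalRing A] [Module K A]
    (α : AlgPartialAction K G A) (g : G) (a : A) (h : G) (b : A) : A :=
  α.act g (α.act g⁻¹ a * b)

universe u v

/-- An enveloping (global) action for a partial action `α` of `G` on `A`:
an algebra `B` with a global action `β` of `G` by algebra automorphisms, and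
an isomorphism `φ` of `A` onto an ideal of `B` such that
`φ(D g) = φ(A) ∩ β g (φ(A))`, `φ ∘ α_g = β_g ∘ φ` on `D g⁻¹`, and `B` is
generated by `⋃ g, β g (φ(A))`. -/
structure EnvelopingAction (K : Type u) [Field K] (G : Type v) [Group G]
    (A : Type v) [Ring A] [Algebra K A] (α : AlgPartialAction K G A) where
  B : Type v
  [ringB : NonUnitalRing B]
  [moduleB : Module K B]
  [smulCommB : SMulCommClass K B B]
  [towerB : IsScalarTower K B B]
  β : G → B → B
  β_one : ∀ b : B, β 1 b = b
  β_comp : ∀ g h : G, ∀ b : B, β g (β h b) = β (g * h) b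
  β_bij : ∀ g : G, Function.Bijective (β g)
  β_add : ∀ g : G, ∀ x y : B, β g (x + y) = β g x + β g y
  β_smul : ∀ g : G, ∀ (k : K), ∀ x : B, β g (k • x) = k • β g x
  β_mul : ∀ g : G, ∀ x y : B, β g (x * y) = β g x * β g y
  φ : A → B
  φ_add : ∀ x y : A, φ (x + y) = φ x + φ y
  φ_smul : ∀ (k : K), ∀ x : A, φ (k • x) = k • φ x
  φ_mul : ∀ x y : A, φ (x * y) = φ x * φ y
  φ_inj : Function.Injective φ
  ideal : ∀ b : B, ∀ a : A, b * φ a ∈ Set.range φ ∧ φ a * b ∈ Set.range φ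
  restr : ∀ g : G, φ '' (α.D g) = Set.range φ ∩ β g '' (Set.range φ)
  equivar : ∀ g : G, ∀ a ∈ α.D g⁻¹, φ (α.act g a) = β g (φ a)
  gen : NonUnitalAlgebra.adjoin K (⋃ g : G, β g '' (Set.range φ)) = ⊤

attribute [instance] EnvelopingAction.ringB EnvelopingAction.moduleB
  EnvelopingAction.smulCommB EnvelopingAction.towerB


/-!
If every `D g` has a unit `e g`, the units are central idempotents and
`σ_g a := α_g (e_{g⁻¹} a)` extends `α_g` to an endomorphism of `A` with
`σ_g ∘ σ_h = e_g · σ_{gh}`. Then `a ↦ (h ↦ σ_{h⁻¹} a)` embeds `A` as an ideal of the algebra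
generated by its left translates inside `G → A`, and left translation is an enveloping action.

Conversely, in an enveloping action `φ(D g) = φ(A) ∩ β_g(φ(A))` is an intersection of ideals with
units `φ 1` and `β_g (φ 1)`, so `β_g (φ 1) * φ 1` is a unit of `D g`. The map
`x ↦ (h ↦ φ⁻¹ (φ 1 * β_{h⁻¹} x))` is an equivariant algebra map from the enveloping algebra to
`G → A` restricting to the embedding above, so its image is the model. It is injective: an element
killed by every `β_g (φ 1)` is a sum of finitely many translates `β_g (φ a)`, and multiplying by
`β_g (φ 1)` peels them off one at a time. Any two enveloping actions are therefore isomorphic to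
the model, hence to each other.
-/

section LeftTranslate

variable (K : Type*) {G : Type*} (A : Type*) [CommSemiring K] [Group G]
  [NonUnitalNonAssocSemiring A] [Module K A]

def leftTranslate (g : G) : (G → A) →ₙₐ[K] (G → A) where
  toFun f h := f (g⁻¹ * h)
  map_smul' _ _ := rfl
  map_zero' := rfl
  map_add' _ _ := rfl
  map_mul' _ _ := rfl

variable {K A}

@[simp]
theorem leftTranslate_apply (g : G) (f : G → A) (h : G) :
    leftTranslate K A g f h = f (g⁻¹ * h) := rfl

@[simp]
theorem leftTranslate_one (f : G → A) : leftTranslate K A 1 f = f := by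
  ext h
  simp

theorem leftTranslate_leftTranslate (g m : G) (f : G → A) :
    leftTranslate K A g (leftTranslate K A m f) = leftTranslate K A (g * m) f := by
  ext h
  simp [mul_assoc]

end LeftTranslate

theorem NonUnitalAlgHom.exists_bijective_comp_eq_of_range_eq {R B B' C : Type*} [CommSemiring R]
    [NonUnitalNonAssocSemiring B] [Module R B] [NonUnitalNonAssocSemiring B'] [Module R B']
    [NonUnitalNonAssocSemiring C] [Module R C] {f : B →ₙₐ[R] C} {f' : B' →ₙₐ[R] C}
    (hf : Function.Injective f) (hf' : Function.Injective f')
    (h : NonUnitalAlgHom.range f = NonUnitalAlgHom.range f') :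
    ∃ ψ : B →ₙₐ[R] B', Function.Bijective ψ ∧ f'.comp ψ = f := by
  have hmem : ∀ x, ∃ y, f' y = f x := fun x =>
    (NonUnitalAlgHom.mem_range f').1 (h ▸ NonUnitalAlgHom.mem_range_self f x)
  choose ψ hψ using hmem
  let ψₙₐ : B →ₙₐ[R] B' :=
    { toFun := ψ
      map_smul' := fun r x => hf' (by simp [hψ])
      map_zero' := hf' (by simp [hψ])
      map_add' := fun x y => hf' (by simp [hψ])
      map_mul' := fun x y => hf' (by simp [hψ]) }
  refine ⟨ψₙₐ, ⟨fun x y hxy => hf ?_, fun y => ?_⟩, NonUnitalAlgHom.ext hψ⟩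
  · rw [← hψ, ← hψ]
    exact congrArg f' hxy
  · obtain ⟨x, hx⟩ := (NonUnitalAlgHom.mem_range f).1 (h.symm ▸ NonUnitalAlgHom.mem_range_self f' y)
    exact ⟨x, hf' ((hψ x).trans hx)⟩

namespace AlgPartialAction

section NonUnital

variable {K G A : Type*} [Field K] [Group G] [NonUnitalRing A] [Module K A]
  (α : AlgPartialAction K G A)

theorem mul_mem_left {g : G} (a : A) {b : A} (hb : b ∈ α.D g) : a * b ∈ α.D g :=
  ((α.isIdeal g).2.2.2 b hb a).2

theorem mul_mem_right {g : G} {a : A} (ha : a ∈ α.D g) (b : A) : a * b ∈ α.D g :=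
  ((α.isIdeal g).2.2.2 a ha b).1

def IsUnitFamily (e : G → A) : Prop :=
  ∀ g, e g ∈ α.D g ∧ ∀ x ∈ α.D g, e g * x = x ∧ x * e g = x

namespace IsUnitFamily

variable {α} {e : G → A} (he : α.IsUnitFamily e)
include he

theorem mem (g : G) : e g ∈ α.D g := (he g).1

theorem unit_mul {g : G} {x : A} (hx : x ∈ α.D g) : e g * x = x := ((he g).2 x hx).1

theorem mul_unit {g : G} {x : A} (hx : x ∈ α.D g) : x * e g = x := ((he g).2 x hx).2

theorem mul_self (g : G) : e g * e g = e g := he.unit_mul (he.mem g)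

theorem commute (g : G) (a : A) : e g * a = a * e g :=
  calc e g * a = (e g * a) * e g := (he.mul_unit (α.mul_mem_right (he.mem g) a)).symm
    _ = e g * (a * e g) := mul_assoc _ _ _
    _ = a * e g := he.unit_mul (α.mul_mem_left a (he.mem g))

theorem unit_mul_mul_unit_mul (g : G) (a b : A) : (e g * a) * (e g * b) = e g * (a * b) := by
  rw [mul_assoc, ← mul_assoc a, ← he.commute, ← mul_assoc, ← mul_assoc, he.mul_self, mul_assoc]

end IsUnitFamily

end NonUnital

section Unital

variable {K G A : Type*} [Field K] [Group G] [Ring A] [Algebra K A]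
  {α : AlgPartialAction K G A} {e : G → A} (he : α.IsUnitFamily e)
include he

namespace IsUnitFamily

theorem unit_one : e 1 = 1 := by
  simpa using he.mul_unit (x := 1) (α.D_one ▸ Set.mem_univ _)

def extAct (g : G) : A →ₙₐ[K] A where
  toFun a := α.act g (e g⁻¹ * a)
  map_smul' k a := by
    simpa [mul_smul_comm] using α.act_smul g k _ (α.mul_mem_right (he.mem g⁻¹) a)
  map_zero' := by
    simpa using α.act_smul g 0 0 (α.isIdeal g⁻¹).1
  map_add' a b := by
    simpa [mul_add] using α.act_add g _ (α.mul_mem_right (he.mem g⁻¹) a) _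
      (α.mul_mem_right (he.mem g⁻¹) b)
  map_mul' a b := by
    simpa [he.unit_mul_mul_unit_mul] using α.act_mul g _ (α.mul_mem_right (he.mem g⁻¹) a) _
      (α.mul_mem_right (he.mem g⁻¹) b)

theorem extAct_apply (g : G) (a : A) : he.extAct g a = α.act g (e g⁻¹ * a) := rfl

theorem extAct_mem (g : G) (a : A) : he.extAct g a ∈ α.D g :=
  (α.bijOn g).mapsTo (α.mul_mem_right (he.mem g⁻¹) a)

theorem extAct_of_mem {g : G} {a : A} (ha : a ∈ α.D g⁻¹) : he.extAct g a = α.act g a := by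
  rw [extAct_apply, he.unit_mul ha]

theorem extAct_one_apply (a : A) : he.extAct 1 a = a := by
  rw [extAct_apply, inv_one, he.unit_one, one_mul, α.act_one]

theorem extAct_unit (g h : G) : he.extAct g (e h) = e g * e (g * h) := by
  have hu : e g⁻¹ * e h ∈ α.D g⁻¹ ∩ α.D h :=
    ⟨α.mul_mem_right (he.mem _) _, α.mul_mem_left _ (he.mem h)⟩
  have hv : he.extAct g (e h) ∈ α.D g ∩ α.D (g * h) := α.act_image g h ▸ ⟨_, hu, rfl⟩
  obtain ⟨w, hw, hwe⟩ : e g * e (g * h) ∈ α.act g '' (α.D g⁻¹ ∩ α.D h) := by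
    rw [α.act_image]
    exact ⟨α.mul_mem_right (he.mem g) _, α.mul_mem_left _ (he.mem _)⟩
  calc he.extAct g (e h) = e g * (e (g * h) * he.extAct g (e h)) := by
        rw [he.unit_mul hv.2, he.unit_mul hv.1]
    _ = α.act g w * α.act g (e g⁻¹ * e h) := by rw [← mul_assoc, hwe]; rfl
    _ = α.act g (w * (e g⁻¹ * e h)) := (α.act_mul g _ hw.1 _ hu.1).symm
    _ = e g * e (g * h) := by rw [← mul_assoc, he.mul_unit hw.1, he.mul_unit hw.2, hwe]

theorem extAct_apply_one (g : G) : he.extAct g 1 = e g := by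
  rw [← he.unit_one, extAct_unit, mul_one, he.mul_self]

theorem extAct_extAct (g h : G) (a : A) :
    he.extAct g (he.extAct h a) = e g * he.extAct (g * h) a := by
  have hmem : e h⁻¹ * (e (g * h)⁻¹ * a) ∈ α.D h⁻¹ ∩ α.D (g * h)⁻¹ :=
    ⟨α.mul_mem_right (he.mem _) _, α.mul_mem_left _ (α.mul_mem_right (he.mem _) a)⟩
  have hcut : e g⁻¹ * he.extAct h a = he.extAct h (e (g * h)⁻¹ * a) := by
    rw [map_mul, extAct_unit, mul_inv_rev, mul_inv_cancel_left, he.commute h, mul_assoc,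
      he.unit_mul (he.extAct_mem h a)]
  calc he.extAct g (he.extAct h a)
      = α.act g (α.act h (e h⁻¹ * (e (g * h)⁻¹ * a))) := by rw [extAct_apply, hcut]; rfl
    _ = α.act (g * h) (e (g * h)⁻¹ * (e h⁻¹ * a)) := by
        rw [α.act_comp g h _ hmem, ← mul_assoc, he.commute h⁻¹, mul_assoc]
    _ = e g * he.extAct (g * h) a := by
        rw [← he.extAct_apply, map_mul, extAct_unit, mul_inv_cancel_right, he.commute (g * h),
          mul_assoc, he.unit_mul (he.extAct_mem _ a)]

theorem extAct_extAct_of_mem {h : G} {a : A} (ha : a ∈ α.D h⁻¹) (g : G) :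
    he.extAct g (he.extAct h a) = he.extAct (g * h) a := by
  have hmem : he.extAct (g * h) a ∈ α.D g := by
    rw [← he.unit_mul ha, map_mul, extAct_unit, mul_inv_cancel_right]
    exact α.mul_mem_right (α.mul_mem_left _ (he.mem g)) _
  rw [he.extAct_extAct, he.unit_mul hmem]


def toFunctions : A →ₙₐ[K] (G → A) where
  toFun a h := he.extAct h⁻¹ a
  map_smul' k a := funext fun h => map_smul (he.extAct h⁻¹) k a
  map_zero' := funext fun h => map_zero (he.extAct h⁻¹)
  map_add' a b := funext fun h => map_add (he.extAct h⁻¹) a b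
  map_mul' a b := funext fun h => map_mul (he.extAct h⁻¹) a b

theorem toFunctions_apply (a : A) (h : G) : he.toFunctions a h = he.extAct h⁻¹ a := rfl

theorem toFunctions_injective : Function.Injective he.toFunctions := fun a b hab => by
  simpa [toFunctions_apply, extAct_one_apply] using congrFun hab 1

theorem leftTranslate_toFunctions_apply (g : G) (a : A) (h : G) :
    leftTranslate K A g (he.toFunctions a) h = he.extAct (h⁻¹ * g) a := by
  simp [toFunctions_apply]

theorem leftTranslate_toFunctions_of_mem {g : G} {a : A} (ha : a ∈ α.D g⁻¹) :
    leftTranslate K A g (he.toFunctions a) = he.toFunctions (he.extAct g a) := by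
  ext h
  rw [leftTranslate_toFunctions_apply, toFunctions_apply, he.extAct_extAct_of_mem ha]

theorem leftTranslate_toFunctions_mul (g : G) (c a : A) :
    leftTranslate K A g (he.toFunctions c) * he.toFunctions a =
      he.toFunctions (he.extAct g c * a) := by
  ext h
  rw [Pi.mul_apply, toFunctions_apply, toFunctions_apply, map_mul, extAct_extAct, he.commute,
    mul_assoc, he.unit_mul (he.extAct_mem _ a), leftTranslate_toFunctions_apply]

theorem toFunctions_mul_leftTranslate (g : G) (c a : A) :
    he.toFunctions a * leftTranslate K A g (he.toFunctions c) =
      he.toFunctions (a * he.extAct g c) := by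
  ext h
  rw [Pi.mul_apply, toFunctions_apply, toFunctions_apply, map_mul, extAct_extAct, ← mul_assoc,
    he.mul_unit (he.extAct_mem _ a), leftTranslate_toFunctions_apply]

def envelopeSubalgebra : NonUnitalSubalgebra K (G → A) :=
  NonUnitalAlgebra.adjoin K (⋃ g, leftTranslate K A g '' Set.range he.toFunctions)

theorem toFunctions_mem_envelopeSubalgebra (a : A) : he.toFunctions a ∈ he.envelopeSubalgebra :=
  NonUnitalAlgebra.subset_adjoin K
    (Set.mem_iUnion.2 ⟨1, he.toFunctions a, ⟨a, rfl⟩, leftTranslate_one _⟩)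

theorem leftTranslate_mem_envelopeSubalgebra (g : G) {x : G → A}
    (hx : x ∈ he.envelopeSubalgebra) : leftTranslate K A g x ∈ he.envelopeSubalgebra := by
  refine NonUnitalAlgebra.adjoin_le (S := he.envelopeSubalgebra.comap (leftTranslate K A g))
    ?_ hx
  rintro _ ⟨_, ⟨m, rfl⟩, _, ⟨a, rfl⟩, rfl⟩
  rw [SetLike.mem_coe, NonUnitalSubalgebra.mem_comap, leftTranslate_leftTranslate]
  exact NonUnitalAlgebra.subset_adjoin K (Set.mem_iUnion.2 ⟨g * m, _, ⟨a, rfl⟩, rfl⟩)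

theorem mul_mem_range_toFunctions {x : G → A} (hx : x ∈ he.envelopeSubalgebra) {y : G → A}
    (hy : y ∈ NonUnitalAlgHom.range he.toFunctions) :
    x * y ∈ NonUnitalAlgHom.range he.toFunctions ∧
      y * x ∈ NonUnitalAlgHom.range he.toFunctions := by
  induction hx using NonUnitalAlgebra.adjoin_induction generalizing y with
  | mem x hx =>
    obtain ⟨_, ⟨g, rfl⟩, _, ⟨c, rfl⟩, rfl⟩ := hx
    obtain ⟨a, rfl⟩ := (NonUnitalAlgHom.mem_range _).1 hy
    rw [leftTranslate_toFunctions_mul, toFunctions_mul_leftTranslate]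
    exact ⟨⟨_, rfl⟩, ⟨_, rfl⟩⟩
  | add x x' _ _ ih ih' =>
    rw [add_mul, mul_add]
    exact ⟨add_mem (ih hy).1 (ih' hy).1, add_mem (ih hy).2 (ih' hy).2⟩
  | zero => simp [zero_mem]
  | mul x x' _ _ ih ih' =>
    rw [mul_assoc x x' y, ← mul_assoc y x x']
    exact ⟨(ih (ih' hy).1).1, (ih' (ih hy).2).2⟩
  | smul k x _ ih =>
    rw [smul_mul_assoc, mul_smul_comm]
    exact ⟨SMulMemClass.smul_mem k (ih hy).1, SMulMemClass.smul_mem k (ih hy).2⟩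

def toEnvelope : A →ₙₐ[K] he.envelopeSubalgebra :=
  NonUnitalAlgHom.codRestrict he.toFunctions _ he.toFunctions_mem_envelopeSubalgebra

def envelopeTranslate (g : G) : he.envelopeSubalgebra →ₙₐ[K] he.envelopeSubalgebra :=
  NonUnitalAlgHom.codRestrict
    ((leftTranslate K A g).comp (NonUnitalSubalgebraClass.subtype he.envelopeSubalgebra)) _
    fun x => he.leftTranslate_mem_envelopeSubalgebra g x.2

theorem envelopeTranslate_envelopeTranslate (g m : G) (x : he.envelopeSubalgebra) :
    he.envelopeTranslate g (he.envelopeTranslate m x) = he.envelopeTranslate (g * m) x :=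
  Subtype.ext (leftTranslate_leftTranslate (K := K) g m x.1)

theorem envelopeTranslate_one (x : he.envelopeSubalgebra) : he.envelopeTranslate 1 x = x :=
  Subtype.ext (leftTranslate_one (K := K) x.1)

theorem mem_range_toEnvelope_iff {x : he.envelopeSubalgebra} :
    x ∈ Set.range he.toEnvelope ↔ (x : G → A) ∈ NonUnitalAlgHom.range he.toFunctions := by
  rw [NonUnitalAlgHom.mem_range]
  exact ⟨fun ⟨a, ha⟩ => ⟨a, congrArg Subtype.val ha⟩, fun ⟨a, ha⟩ => ⟨a, Subtype.ext ha⟩⟩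

theorem toEnvelope_image_D (g : G) :
    he.toEnvelope '' α.D g =
      Set.range he.toEnvelope ∩ he.envelopeTranslate g '' Set.range he.toEnvelope := by
  ext x
  constructor
  · rintro ⟨a, ha, rfl⟩
    refine ⟨⟨a, rfl⟩, he.toEnvelope (he.extAct g⁻¹ a), ⟨_, rfl⟩, Subtype.ext ?_⟩
    change leftTranslate K A g (he.toFunctions (he.extAct g⁻¹ a)) = he.toFunctions a
    rw [he.leftTranslate_toFunctions_of_mem (he.extAct_mem _ _),
      he.extAct_extAct_of_mem (by rwa [inv_inv]), mul_inv_cancel, extAct_one_apply]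
  · rintro ⟨⟨a, rfl⟩, _, ⟨b, rfl⟩, hab⟩
    have hab₁ := congrFun (congrArg Subtype.val hab) 1
    change leftTranslate K A g (he.toFunctions b) 1 = he.toFunctions a 1 at hab₁
    have hba : he.extAct g b = a := by
      simpa [leftTranslate_toFunctions_apply, toFunctions_apply, extAct_one_apply] using hab₁
    exact ⟨a, hba ▸ he.extAct_mem g b, rfl⟩

theorem adjoin_envelopeTranslate_image_range_toEnvelope :
    NonUnitalAlgebra.adjoin K (⋃ g, he.envelopeTranslate g '' Set.range he.toEnvelope) = ⊤ := by
  apply NonUnitalSubalgebra.map_injective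
    (f := NonUnitalSubalgebraClass.subtype he.envelopeSubalgebra) Subtype.val_injective
  rw [NonUnitalAlgHom.map_adjoin, NonUnitalAlgebra.map_top, NonUnitalSubalgebra.range_val]
  simp only [envelopeSubalgebra, Set.image_iUnion, ← Set.range_comp]
  rfl

end IsUnitFamily

end Unital

end AlgPartialAction

namespace AlgPartialAction.IsUnitFamily

variable {K : Type u} [Field K] {G : Type v} [Group G] {A : Type v} [Ring A] [Algebra K A]
  {α : AlgPartialAction K G A} {e : G → A} (he : α.IsUnitFamily e)

def envelope : EnvelopingAction K G A α where
  B := he.envelopeSubalgebra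
  β g := he.envelopeTranslate g
  β_one := he.envelopeTranslate_one
  β_comp := he.envelopeTranslate_envelopeTranslate
  β_bij g := Function.bijective_iff_has_inverse.2 ⟨he.envelopeTranslate g⁻¹,
    fun x => by rw [envelopeTranslate_envelopeTranslate, inv_mul_cancel, envelopeTranslate_one],
    fun x => by rw [envelopeTranslate_envelopeTranslate, mul_inv_cancel, envelopeTranslate_one]⟩
  β_add g := map_add (he.envelopeTranslate g)
  β_smul g := map_smul (he.envelopeTranslate g)
  β_mul g := map_mul (he.envelopeTranslate g)
  φ := he.toEnvelope
  φ_add := map_add he.toEnvelope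
  φ_smul := map_smul he.toEnvelope
  φ_mul := map_mul he.toEnvelope
  φ_inj _ _ hab := he.toFunctions_injective (congrArg Subtype.val hab)
  ideal x a :=
    have hxa := he.mul_mem_range_toFunctions x.2 (NonUnitalAlgHom.mem_range_self _ a)
    ⟨he.mem_range_toEnvelope_iff.2 hxa.1, he.mem_range_toEnvelope_iff.2 hxa.2⟩
  restr := he.toEnvelope_image_D
  equivar g a ha := Subtype.ext <| by
    change he.toFunctions _ = leftTranslate K A g (he.toFunctions a)
    rw [he.leftTranslate_toFunctions_of_mem ha, he.extAct_of_mem ha]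
  gen := he.adjoin_envelopeTranslate_image_range_toEnvelope

end AlgPartialAction.IsUnitFamily

namespace EnvelopingAction

variable {K : Type u} [Field K] {G : Type v} [Group G] {A : Type v} [Ring A] [Algebra K A]
  {α : AlgPartialAction K G A} (E : EnvelopingAction K G A α)

theorem φ_zero : E.φ 0 = 0 := by simpa using E.φ_add 0 0

theorem β_zero (g : G) : E.β g 0 = 0 := by simpa using E.β_add g 0 0

theorem β_β_inv (g : G) (x : E.B) : E.β g (E.β g⁻¹ x) = x := by
  rw [E.β_comp, mul_inv_cancel, E.β_one]

theorem φ_one_mul (a : A) : E.φ 1 * E.φ a = E.φ a := by rw [← E.φ_mul, one_mul]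

theorem φ_mul_one (a : A) : E.φ a * E.φ 1 = E.φ a := by rw [← E.φ_mul, mul_one]

theorem mem_D_iff {g : G} {a : A} : a ∈ α.D g ↔ E.φ a ∈ E.β g '' Set.range E.φ := by
  rw [← E.φ_inj.mem_set_image, E.restr, Set.mem_inter_iff, and_iff_right ⟨a, rfl⟩]

theorem mul_β_φ_mem_image (x : E.B) (g : G) (c : A) :
    x * E.β g (E.φ c) ∈ E.β g '' Set.range E.φ :=
  ⟨E.β g⁻¹ x * E.φ c, (E.ideal _ c).1, by rw [E.β_mul, E.β_β_inv]⟩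

theorem β_φ_mul_mem_image (x : E.B) (g : G) (c : A) :
    E.β g (E.φ c) * x ∈ E.β g '' Set.range E.φ :=
  ⟨E.φ c * E.β g⁻¹ x, (E.ideal _ c).2, by rw [E.β_mul, E.β_β_inv]⟩

theorem exists_unit (E : EnvelopingAction K G A α) (g : G) :
    ∃ u ∈ α.D g, ∀ x ∈ α.D g, u * x = x ∧ x * u = x := by
  obtain ⟨u, hu⟩ := (E.ideal (E.β g (E.φ 1)) 1).1
  refine ⟨u, E.mem_D_iff.2 (hu ▸ E.β_φ_mul_mem_image _ g 1), fun x hx => ?_⟩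
  obtain ⟨_, ⟨c, rfl⟩, hc⟩ := E.mem_D_iff.1 hx
  constructor <;> apply E.φ_inj <;> rw [E.φ_mul, hu]
  · rw [mul_assoc, E.φ_one_mul, ← hc, ← E.β_mul, E.φ_one_mul]
  · rw [← mul_assoc, ← hc, ← E.β_mul, E.φ_mul_one, hc, E.φ_mul_one]

def βφ (g : G) : A →ₗ[K] E.B where
  toFun a := E.β g (E.φ a)
  map_add' a b := by rw [E.φ_add, E.β_add]
  map_smul' k a := by rw [E.φ_smul, E.β_smul]; rfl

theorem coe_range_βφ (g : G) :
    (LinearMap.range (E.βφ g) : Set E.B) = E.β g '' Set.range E.φ := by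
  rw [LinearMap.coe_range, ← Set.range_comp]
  rfl

theorem iSup_range_βφ : ⨆ g, LinearMap.range (E.βφ g) = ⊤ := by
  -- the generators `β g (φ a)` are closed under multiplication, so they span the algebra
  let S : Subsemigroup E.B :=
    { carrier := ⋃ g, E.β g '' Set.range E.φ
      mul_mem' := by
        rintro x _ - hy
        obtain ⟨m, _, ⟨c, rfl⟩, rfl⟩ := Set.mem_iUnion.1 hy
        exact Set.mem_iUnion.2 ⟨m, E.mul_β_φ_mem_image x m c⟩ }
  have h := NonUnitalAlgebra.adjoin_eq_span (R := K) (S : Set E.B)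
  rw [Subsemigroup.closure_eq] at h
  change (NonUnitalAlgebra.adjoin K (⋃ g, E.β g '' Set.range E.φ)).toSubmodule =
    Submodule.span K (⋃ g, E.β g '' Set.range E.φ) at h
  rw [E.gen, NonUnitalAlgebra.top_toSubmodule, Submodule.span_iUnion] at h
  simp_rw [← coe_range_βφ, Submodule.span_eq] at h
  exact h.symm

-- `β g₀ (φ 1)` is a left unit for `β g₀ (φ(A))`, and left multiplication by it preserves every
-- translate `β g (φ(A))`.
theorem sub_β_φ_one_mul_mem [DecidableEq G] {g₀ : G} {T : Finset G} {z : E.B}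
    (hz : z ∈ ⨆ g ∈ insert g₀ T, LinearMap.range (E.βφ g)) :
    z - E.β g₀ (E.φ 1) * z ∈ ⨆ g ∈ T, LinearMap.range (E.βφ g) := by
  let f : E.B →ₗ[K] E.B := LinearMap.id - LinearMap.mulLeft K (E.β g₀ (E.φ 1))
  suffices h : ⨆ g ∈ insert g₀ T, LinearMap.range (E.βφ g) ≤
      (⨆ g ∈ T, LinearMap.range (E.βφ g)).comap f from h hz
  refine iSup₂_le fun g hg => ?_
  rintro _ ⟨a, rfl⟩
  rw [Submodule.mem_comap]
  rcases Finset.mem_insert.1 hg with rfl | hg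
  · have : f (E.βφ g a) = 0 := by
      simp [f, βφ, ← E.β_mul, E.φ_one_mul]
    rw [this]
    exact zero_mem _
  · obtain ⟨_, ⟨c, rfl⟩, hc⟩ := E.mul_β_φ_mem_image (E.β g₀ (E.φ 1)) g a
    refine le_biSup (fun g => LinearMap.range (E.βφ g)) hg ⟨a - c, ?_⟩
    rw [map_sub]
    simp [f, βφ, hc]

theorem eq_zero_of_mem_iSup (T : Finset G) {z : E.B}
    (hz : z ∈ ⨆ g ∈ T, LinearMap.range (E.βφ g)) (h : ∀ g, E.β g (E.φ 1) * z = 0) : z = 0 := by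
  classical
  induction T using Finset.induction_on with
  | empty => simpa using hz
  | insert g₀ T _ ih => exact ih (by simpa [h g₀] using E.sub_β_φ_one_mul_mem hz)


noncomputable def coord (x : E.B) (h : G) : A := (E.ideal (E.β h⁻¹ x) 1).2.choose

theorem φ_coord (x : E.B) (h : G) : E.φ (E.coord x h) = E.φ 1 * E.β h⁻¹ x :=
  (E.ideal (E.β h⁻¹ x) 1).2.choose_spec

noncomputable def toFunctions : E.B →ₙₐ[K] (G → A) where
  toFun := E.coord
  map_smul' k x := funext fun h => E.φ_inj <| by
    rw [E.φ_coord, Pi.smul_apply, E.φ_smul, E.φ_coord, E.β_smul, mul_smul_comm]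
    rfl
  map_zero' := funext fun h => E.φ_inj <| by
    rw [E.φ_coord, E.β_zero, mul_zero, Pi.zero_apply, E.φ_zero]
  map_add' x y := funext fun h => E.φ_inj <| by
    rw [E.φ_coord, Pi.add_apply, E.φ_add, E.φ_coord, E.φ_coord, E.β_add, mul_add]
  map_mul' x y := funext fun h => E.φ_inj <| by
    -- `φ 1` is a unit for the ideal `φ(A)`, which contains `φ 1 * β h⁻¹ x`
    rw [Pi.mul_apply, E.φ_mul, E.φ_coord (x * y), E.φ_coord y, ← mul_assoc, ← E.φ_mul, mul_one,
      E.φ_coord, E.β_mul, mul_assoc]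

theorem φ_toFunctions_apply (x : E.B) (h : G) :
    E.φ (E.toFunctions x h) = E.φ 1 * E.β h⁻¹ x :=
  E.φ_coord x h

theorem toFunctions_β (g : G) (x : E.B) :
    E.toFunctions (E.β g x) = leftTranslate K A g (E.toFunctions x) := by
  ext h
  apply E.φ_inj
  rw [φ_toFunctions_apply, leftTranslate_apply, φ_toFunctions_apply, E.β_comp, mul_inv_rev,
    inv_inv]

theorem toFunctions_injective : Function.Injective E.toFunctions := by
  refine (injective_iff_map_eq_zero E.toFunctions).2 fun z hz => ?_
  have hkill : ∀ g, E.β g (E.φ 1) * z = 0 := fun g => by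
    have h0 : E.φ 1 * E.β g⁻¹ z = 0 := by
      rw [← φ_toFunctions_apply, hz, Pi.zero_apply, E.φ_zero]
    rw [← E.β_β_inv g z, ← E.β_mul, h0, E.β_zero]
  have hz : z ∈ ⨆ g, LinearMap.range (E.βφ g) := E.iSup_range_βφ ▸ Submodule.mem_top
  obtain ⟨T, hT⟩ := Submodule.mem_iSup_iff_exists_finset.1 hz
  exact E.eq_zero_of_mem_iSup T hT hkill

variable {e : G → A} (he : α.IsUnitFamily e)
include he

theorem φ_extAct (g : G) (a : A) : E.φ (he.extAct g a) = E.β g (E.φ (e g⁻¹ * a)) :=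
  E.equivar g _ (α.mul_mem_right (he.mem _) a)

theorem φ_one_mul_β_φ (g : G) (c : A) : E.φ 1 * E.β g (E.φ c) = E.φ (he.extAct g c) := by
  obtain ⟨v, hv⟩ := (E.ideal (E.β g (E.φ c)) 1).2
  have hvD : v ∈ α.D g := E.mem_D_iff.2 (hv ▸ E.mul_β_φ_mem_image _ g c)
  calc E.φ 1 * E.β g (E.φ c) = E.φ (v * e g) := by rw [he.mul_unit hvD, hv]
    _ = E.φ 1 * E.β g (E.φ (c * e g⁻¹)) := by
        rw [E.φ_mul, hv, ← he.extAct_apply_one, E.φ_extAct he, mul_one, mul_assoc, ← E.β_mul,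
          ← E.φ_mul]
    _ = E.φ (he.extAct g c) := by rw [← he.commute, ← E.φ_extAct he, E.φ_one_mul]

theorem toFunctions_φ (a : A) : E.toFunctions (E.φ a) = he.toFunctions a := by
  ext h
  apply E.φ_inj
  rw [φ_toFunctions_apply, E.φ_one_mul_β_φ he, he.toFunctions_apply]

theorem range_toFunctions : NonUnitalAlgHom.range E.toFunctions = he.envelopeSubalgebra := by
  rw [← NonUnitalAlgebra.map_top, ← E.gen, NonUnitalAlgHom.map_adjoin,
    AlgPartialAction.IsUnitFamily.envelopeSubalgebra, Set.image_iUnion]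
  refine congrArg _ (Set.iUnion_congr fun g => ?_)
  rw [Set.image_image, ← Set.range_comp, ← Set.range_comp]
  congr 1
  ext a : 1
  simp [E.toFunctions_β, E.toFunctions_φ he]

end EnvelopingAction

/-- A partial action `α` of `G` on a unital algebra `A` admits an enveloping
action iff each ideal `D g` is a unital algebra (equivalently, `D g` is
generated by a central idempotent); moreover the enveloping action, when it
exists, is unique up to equivalence. -/
theorem envelopingAction_exists_iff_and_unique (K : Type u) [Field K]
    (G : Type v) [Group G] (A : Type v) [Ring A] [Algebra K A]
    (α : AlgPartialAction K G A) :
    (Nonempty (EnvelopingAction K G A α) ↔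
      ∀ g : G, ∃ e ∈ α.D g, ∀ x ∈ α.D g, e * x = x ∧ x * e = x) ∧
    (∀ E E' : EnvelopingAction K G A α, ∃ ψ : E.B → E'.B,
      Function.Bijective ψ ∧
      (∀ x y : E.B, ψ (x * y) = ψ x * ψ y) ∧
      (∀ x y : E.B, ψ (x + y) = ψ x + ψ y) ∧
      (∀ (k : K), ∀ x : E.B, ψ (k • x) = k • ψ x) ∧
      (∀ g : G, ∀ x : E.B, ψ (E.β g x) = E'.β g (ψ x)) ∧
      (∀ a : A, ψ (E.φ a) = E'.φ a)) := by
  refine ⟨⟨fun ⟨E⟩ => E.exists_unit, fun h => ?_⟩, fun E E' => ?_⟩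
  · choose e he using h
    exact ⟨AlgPartialAction.IsUnitFamily.envelope (e := e) he⟩
  · choose e he using E.exists_unit
    obtain ⟨ψ, hψ, hcomp⟩ := NonUnitalAlgHom.exists_bijective_comp_eq_of_range_eq
      E.toFunctions_injective E'.toFunctions_injective
      ((E.range_toFunctions he).trans (E'.range_toFunctions he).symm)
    have hψ' (x : E.B) : E'.toFunctions (ψ x) = E.toFunctions x :=
      NonUnitalAlgHom.congr_fun hcomp x
    refine ⟨ψ, hψ, map_mul ψ, map_add ψ, map_smul ψ, fun g x => E'.toFunctions_injective ?_,
      fun a => E'.toFunctions_injective ?_⟩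
    · rw [hψ', E.toFunctions_β, E'.toFunctions_β, hψ']
    · rw [hψ', E.toFunctions_φ he, E'.toFunctions_φ he]
end

section
/- Let π : G → B be a partial representation of a group G into a unital K-algebra B, set ε_g = π(g)π(g^{-1}), and let A be the subalgebra of B generated by all ε_g. Then the ε_g are commuting idempotents, π(g)ε_h = ε_{gh}π(g), and the maps α_g : ε_{g^{-1}}A → ε_g A defined by α_g(a) = π(g) a π(g^{-1}) are algebra isomorphisms determining a partial action of G on A (with D_g = ε_g A). -/
variable {K : Type*} [Field K] {G : Type*} [Group G] {B : Type*} [Ring B]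
  [Algebra K B]

/-- `ε_g = π(g) π(g⁻¹)`. -/
def epsOf (π : G → B) (g : G) : B := π g * π g⁻¹

/-- The subalgebra `A` of `B` generated by all the `ε_g`. -/
def genSubalg (π : G → B) : Subalgebra K B :=
  Algebra.adjoin K (Set.range (epsOf π))

/-- The ideal `D_g = ε_g A` of `A`. -/
def Drep (π : G → B) (g : G) : Set B :=
  {x : B | ∃ y ∈ genSubalg (K := K) π, x = epsOf π g * y}

/-- `α_g(a) = π(g) a π(g⁻¹)`. -/
def actRep (π : G → B) (g : G) (a : B) : B := π g * a * π g⁻¹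

section aux
variable {π : G → B}

lemma pr_triple (hone : π 1 = 1)
    (h1 : ∀ g h : G, π g * π h * π h⁻¹ = π (g * h) * π h⁻¹) (g : G) :
    π g * π g⁻¹ * π g = π g := by
  have := h1 g g⁻¹
  simpa [hone] using this

lemma eps_pi (hone : π 1 = 1)
    (h1 : ∀ g h : G, π g * π h * π h⁻¹ = π (g * h) * π h⁻¹) (g : G) :
    epsOf π g * π g = π g := by
  simpa [epsOf] using pr_triple hone h1 g

lemma pi_eps (hone : π 1 = 1)
    (h1 : ∀ g h : G, π g * π h * π h⁻¹ = π (g * h) * π h⁻¹) (g : G) :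
    π g * epsOf π g⁻¹ = π g := by
  have := pr_triple hone h1 g
  simp only [epsOf, inv_inv, ← mul_assoc]
  exact this

lemma eps_idem (hone : π 1 = 1)
    (h1 : ∀ g h : G, π g * π h * π h⁻¹ = π (g * h) * π h⁻¹) (g : G) :
    epsOf π g * epsOf π g = epsOf π g := by
  have h := pr_triple hone h1 g
  calc epsOf π g * epsOf π g = (π g * π g⁻¹ * π g) * π g⁻¹ := by
        simp [epsOf, mul_assoc]
    _ = epsOf π g := by rw [h]; rfl

lemma eps_swap
    (h1 : ∀ g h : G, π g * π h * π h⁻¹ = π (g * h) * π h⁻¹)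
    (h2 : ∀ g h : G, π g⁻¹ * π g * π h = π g⁻¹ * π (g * h)) (g h : G) :
    π g * epsOf π h = epsOf π (g * h) * π g := by
  have e1 := h1 g h
  have e2 := h2 (h⁻¹ * g⁻¹) g
  simp only [mul_inv_rev, inv_inv, inv_mul_cancel_right] at e2
  calc π g * epsOf π h = π g * π h * π h⁻¹ := by rw [epsOf, mul_assoc]
    _ = π (g * h) * π h⁻¹ := e1
    _ = π (g * h) * π (h⁻¹ * g⁻¹) * π g := e2.symm
    _ = epsOf π (g * h) * π g := by rw [epsOf, mul_inv_rev]

lemma eps_comm (hone : π 1 = 1)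
    (h1 : ∀ g h : G, π g * π h * π h⁻¹ = π (g * h) * π h⁻¹)
    (h2 : ∀ g h : G, π g⁻¹ * π g * π h = π g⁻¹ * π (g * h)) (g h : G) :
    epsOf π g * epsOf π h = epsOf π h * epsOf π g := by
  have s1 := eps_swap h1 h2 g⁻¹ h
  have s2 := eps_swap h1 h2 g (g⁻¹ * h)
  calc epsOf π g * epsOf π h = π g * (π g⁻¹ * epsOf π h) := by
        rw [epsOf, mul_assoc]
    _ = π g * (epsOf π (g⁻¹ * h) * π g⁻¹) := by rw [s1]
    _ = (π g * epsOf π (g⁻¹ * h)) * π g⁻¹ := by rw [mul_assoc]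
    _ = epsOf π (g * (g⁻¹ * h)) * π g * π g⁻¹ := by rw [s2]
    _ = epsOf π h * epsOf π g := by
        rw [mul_inv_cancel_left]; simp [epsOf, mul_assoc]

lemma eps_mem (g : G) : epsOf π g ∈ genSubalg (K := K) π :=
  Algebra.subset_adjoin ⟨g, rfl⟩

lemma commA (hone : π 1 = 1)
    (h1 : ∀ g h : G, π g * π h * π h⁻¹ = π (g * h) * π h⁻¹)
    (h2 : ∀ g h : G, π g⁻¹ * π g * π h = π g⁻¹ * π (g * h)) (h : G) {y : B}
    (hy : y ∈ genSubalg (K := K) π) : Commute (epsOf π h) y := by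
  induction hy using Algebra.adjoin_induction with
  | mem x hx =>
    obtain ⟨g, rfl⟩ := hx
    exact eps_comm hone h1 h2 h g
  | algebraMap r => exact (Algebra.commutes r _).symm
  | add x y _ _ hx hy => exact hx.add_right hy
  | mul x y _ _ hx hy => exact hx.mul_right hy

lemma conjA (hone : π 1 = 1)
    (h1 : ∀ g h : G, π g * π h * π h⁻¹ = π (g * h) * π h⁻¹)
    (h2 : ∀ g h : G, π g⁻¹ * π g * π h = π g⁻¹ * π (g * h)) (g : G) {y : B}
    (hy : y ∈ genSubalg (K := K) π) :
    π g * y * π g⁻¹ ∈ genSubalg (K := K) π := by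
  induction hy using Algebra.adjoin_induction with
  | mem x hx =>
    obtain ⟨h, rfl⟩ := hx
    rw [eps_swap h1 h2 g h, mul_assoc]
    exact mul_mem (eps_mem (g * h)) (eps_mem g)
  | algebraMap r =>
    have : π g * (algebraMap K B) r * π g⁻¹ = (algebraMap K B) r * epsOf π g := by
      rw [← Algebra.commutes r (π g), mul_assoc]; rfl
    rw [this]
    exact mul_mem (Subalgebra.algebraMap_mem _ r) (eps_mem g)
  | add x y _ _ hx hy =>
    have : π g * (x + y) * π g⁻¹ = π g * x * π g⁻¹ + π g * y * π g⁻¹ := by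
      simp only [mul_add, add_mul]
    rw [this]; exact add_mem hx hy
  | mul x y hxA hyA hx hy =>
    have key : (π g * x * π g⁻¹) * (π g * y * π g⁻¹) = π g * (x * y) * π g⁻¹ := by
      have c1 : x * epsOf π g⁻¹ = epsOf π g⁻¹ * x :=
        (commA hone h1 h2 g⁻¹ hxA).symm
      have c2 : π g * epsOf π g⁻¹ = π g := pi_eps hone h1 g
      calc (π g * x * π g⁻¹) * (π g * y * π g⁻¹)
          = π g * (x * (π g⁻¹ * π g) * y) * π g⁻¹ := by
            simp only [mul_assoc]
        _ = π g * (x * epsOf π g⁻¹ * y) * π g⁻¹ := by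
            rw [epsOf, inv_inv]
        _ = π g * epsOf π g⁻¹ * (x * y) * π g⁻¹ := by
            rw [c1]; simp only [mul_assoc]
        _ = π g * (x * y) * π g⁻¹ := by rw [c2]
    rw [← key]; exact mul_mem hx hy


lemma Drep_subset {g : G} {x : B} (hx : x ∈ Drep (K := K) π g) :
    x ∈ genSubalg (K := K) π := by
  obtain ⟨y, hy, rfl⟩ := hx
  exact mul_mem (eps_mem g) hy

lemma mem_Drep_of {g : G} {x : B} (hx : x ∈ genSubalg (K := K) π)
    (h : epsOf π g * x = x) : x ∈ Drep (K := K) π g := ⟨x, hx, h.symm⟩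

lemma eps_mul_of_mem (hone : π 1 = 1)
    (h1 : ∀ g h : G, π g * π h * π h⁻¹ = π (g * h) * π h⁻¹) {g : G} {x : B}
    (hx : x ∈ Drep (K := K) π g) : epsOf π g * x = x := by
  obtain ⟨y, hy, rfl⟩ := hx
  rw [← mul_assoc, eps_idem hone h1]

lemma mul_eps_of_mem (hone : π 1 = 1)
    (h1 : ∀ g h : G, π g * π h * π h⁻¹ = π (g * h) * π h⁻¹)
    (h2 : ∀ g h : G, π g⁻¹ * π g * π h = π g⁻¹ * π (g * h)) {g : G} {x : B}
    (hx : x ∈ Drep (K := K) π g) : x * epsOf π g = x := by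
  obtain ⟨y, hy, rfl⟩ := hx
  rw [mul_assoc, ← (commA hone h1 h2 g hy), ← mul_assoc, eps_idem hone h1]

lemma pi_mul_of_mem (hone : π 1 = 1)
    (h1 : ∀ g h : G, π g * π h * π h⁻¹ = π (g * h) * π h⁻¹) {g : G} {x : B}
    (hx : x ∈ Drep (K := K) π g⁻¹) : π g * x = π g * π g⁻¹ * (π g * x) := by
  conv_lhs => rw [← eps_mul_of_mem hone h1 hx]
  rw [epsOf, inv_inv]
  simp only [mul_assoc]

lemma mapsTo_act (hone : π 1 = 1)
    (h1 : ∀ g h : G, π g * π h * π h⁻¹ = π (g * h) * π h⁻¹)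
    (h2 : ∀ g h : G, π g⁻¹ * π g * π h = π g⁻¹ * π (g * h)) (g : G) {a : B}
    (ha : a ∈ Drep (K := K) π g⁻¹) : actRep π g a ∈ Drep (K := K) π g := by
  have hA : actRep π g a ∈ genSubalg (K := K) π :=
    conjA hone h1 h2 g (Drep_subset ha)
  refine mem_Drep_of hA ?_
  have : epsOf π g * π g = π g := eps_pi hone h1 g
  calc epsOf π g * actRep π g a = (epsOf π g * π g) * a * π g⁻¹ := by
        rw [actRep]; simp only [mul_assoc]
    _ = actRep π g a := by rw [this, actRep]

lemma act_act_inv (hone : π 1 = 1)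
    (h1 : ∀ g h : G, π g * π h * π h⁻¹ = π (g * h) * π h⁻¹)
    (h2 : ∀ g h : G, π g⁻¹ * π g * π h = π g⁻¹ * π (g * h)) (g : G) {a : B}
    (ha : a ∈ Drep (K := K) π g⁻¹) : actRep π g⁻¹ (actRep π g a) = a := by
  have e1 : epsOf π g⁻¹ * a = a := eps_mul_of_mem hone h1 ha
  have e2 : a * epsOf π g⁻¹ = a := mul_eps_of_mem hone h1 h2 ha
  calc actRep π g⁻¹ (actRep π g a)
      = (π g⁻¹ * π g) * a * (π g⁻¹ * π g) := by
        rw [actRep, actRep, inv_inv]; simp only [mul_assoc]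
    _ = epsOf π g⁻¹ * a * epsOf π g⁻¹ := by rw [epsOf, inv_inv]
    _ = a := by rw [e1, e2]

lemma act_mul (hone : π 1 = 1)
    (h1 : ∀ g h : G, π g * π h * π h⁻¹ = π (g * h) * π h⁻¹)
    (h2 : ∀ g h : G, π g⁻¹ * π g * π h = π g⁻¹ * π (g * h)) (g : G) {a b : B}
    (ha : a ∈ Drep (K := K) π g⁻¹) :
    actRep π g a * actRep π g b = actRep π g (a * b) := by
  have e2 : a * epsOf π g⁻¹ = a := mul_eps_of_mem hone h1 h2 ha
  calc actRep π g a * actRep π g b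
      = π g * (a * (π g⁻¹ * π g) * b) * π g⁻¹ := by
        rw [actRep, actRep]; simp only [mul_assoc]
    _ = π g * ((a * epsOf π g⁻¹) * b) * π g⁻¹ := by rw [epsOf, inv_inv]
    _ = actRep π g (a * b) := by rw [e2, actRep]


lemma compat_mem (hone : π 1 = 1)
    (h1 : ∀ g h : G, π g * π h * π h⁻¹ = π (g * h) * π h⁻¹)
    (h2 : ∀ g h : G, π g⁻¹ * π g * π h = π g⁻¹ * π (g * h)) (g h : G) {a : B}
    (ha : a ∈ Drep (K := K) π h⁻¹)
    (hbg : actRep π h a ∈ Drep (K := K) π g⁻¹) :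
    a ∈ Drep (K := K) π (g * h)⁻¹ := by
  have hab : actRep π h⁻¹ (actRep π h a) = a := act_act_inv hone h1 h2 h ha
  have he : epsOf π g⁻¹ * actRep π h a = actRep π h a :=
    eps_mul_of_mem hone h1 hbg
  refine mem_Drep_of (Drep_subset ha) ?_
  rw [mul_inv_rev]
  conv_lhs => rw [← hab]
  set b := actRep π h a with hbdef
  calc epsOf π (h⁻¹ * g⁻¹) * actRep π h⁻¹ b
      = epsOf π (h⁻¹ * g⁻¹) * π h⁻¹ * (b * π h) := by
        rw [actRep, inv_inv]; simp only [mul_assoc]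
    _ = π h⁻¹ * epsOf π g⁻¹ * (b * π h) := by rw [← eps_swap h1 h2 h⁻¹ g⁻¹]
    _ = π h⁻¹ * (epsOf π g⁻¹ * b) * π h := by simp only [mul_assoc]
    _ = π h⁻¹ * b * π h := by rw [he]
    _ = actRep π h⁻¹ b := by rw [actRep, inv_inv]
    _ = a := hab

lemma act_comp (hone : π 1 = 1)
    (h1 : ∀ g h : G, π g * π h * π h⁻¹ = π (g * h) * π h⁻¹)
    (h2 : ∀ g h : G, π g⁻¹ * π g * π h = π g⁻¹ * π (g * h)) (g h : G) {a : B}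
    (ha : a ∈ Drep (K := K) π h⁻¹)
    (hbh : actRep π h a ∈ Drep (K := K) π h) :
    actRep π g (actRep π h a) = actRep π (g * h) a := by
  have ea : epsOf π h⁻¹ * a = a := eps_mul_of_mem hone h1 ha
  have ea' : a * epsOf π h⁻¹ = a := mul_eps_of_mem hone h1 h2 ha
  have eb : actRep π h a * epsOf π h = actRep π h a :=
    mul_eps_of_mem hone h1 h2 hbh
  have step2 : actRep π h a * π h = π h * a := by
    calc actRep π h a * π h = π h * (a * (π h⁻¹ * π h)) := by
          rw [actRep]; simp only [mul_assoc]
      _ = π h * (a * epsOf π h⁻¹) := by rw [epsOf, inv_inv]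
      _ = π h * a := by rw [ea']
  have step1 : π g * (π h * a) = π (g * h) * a := by
    calc π g * (π h * a) = π g * (π h * (epsOf π h⁻¹ * a)) := by rw [ea]
      _ = (π g * π h * π h⁻¹) * (π h * a) := by
          rw [epsOf, inv_inv]; simp only [mul_assoc]
      _ = (π (g * h) * π h⁻¹) * (π h * a) := by rw [h1 g h]
      _ = π (g * h) * (epsOf π h⁻¹ * a) := by
          rw [epsOf, inv_inv]; simp only [mul_assoc]
      _ = π (g * h) * a := by rw [ea]
  have step3 : actRep π h a * (π h * π (h⁻¹ * g⁻¹)) = actRep π h a * π g⁻¹ := by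
    calc actRep π h a * (π h * π (h⁻¹ * g⁻¹))
        = (actRep π h a * epsOf π h) * (π h * π (h⁻¹ * g⁻¹)) := by rw [eb]
      _ = actRep π h a * (π h * (π h⁻¹ * π h * π (h⁻¹ * g⁻¹))) := by
          rw [epsOf]; simp only [mul_assoc]
      _ = actRep π h a * (π h * (π h⁻¹ * π (h * (h⁻¹ * g⁻¹)))) := by
          rw [h2 h (h⁻¹ * g⁻¹)]
      _ = actRep π h a * (π h * (π h⁻¹ * π g⁻¹)) := by rw [mul_inv_cancel_left]
      _ = (actRep π h a * epsOf π h) * π g⁻¹ := by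
          rw [epsOf]; simp only [mul_assoc]
      _ = actRep π h a * π g⁻¹ := by rw [eb]
  calc actRep π g (actRep π h a)
      = π g * (actRep π h a * π g⁻¹) := by rw [actRep]; simp only [mul_assoc]
    _ = π g * (actRep π h a * (π h * π (h⁻¹ * g⁻¹))) := by rw [step3]
    _ = π g * ((actRep π h a * π h) * π (h⁻¹ * g⁻¹)) := by
        simp only [mul_assoc]
    _ = π g * ((π h * a) * π (h⁻¹ * g⁻¹)) := by rw [step2]
    _ = (π g * (π h * a)) * π (h⁻¹ * g⁻¹) := by simp only [mul_assoc]
    _ = π (g * h) * a * π (h⁻¹ * g⁻¹) := by rw [step1]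
    _ = actRep π (g * h) a := by rw [actRep, mul_inv_rev]

end aux

/-- Let `π : G → B` be a partial representation into a unital `K`-algebra and
`ε_g = π(g)π(g⁻¹)`.  Then the `ε_g` are commuting idempotents,
`π(g) ε_h = ε_{gh} π(g)`, and the maps `α_g : a ↦ π(g) a π(g⁻¹)` are algebra
isomorphisms of `D_{g⁻¹} = ε_{g⁻¹} A` onto `D_g = ε_g A` (where `A` is the
subalgebra generated by the `ε_g`) determining a partial action of `G`
on `A`. -/
theorem partialRepresentation_to_partialAction (π : G → B)
    (hone : π 1 = 1)
    (h1 : ∀ g h : G, π g * π h * π h⁻¹ = π (g * h) * π h⁻¹)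
    (h2 : ∀ g h : G, π g⁻¹ * π g * π h = π g⁻¹ * π (g * h)) :
    -- the `ε_g` are commuting idempotents and `π(g) ε_h = ε_{gh} π(g)`
    (∀ g h : G, epsOf π g * epsOf π h = epsOf π h * epsOf π g) ∧
    (∀ g : G, epsOf π g * epsOf π g = epsOf π g) ∧
    (∀ g h : G, π g * epsOf π h = epsOf π (g * h) * π g) ∧
    -- each `D_g` is an ideal of `A`
    (∀ g : G, ∀ a ∈ Drep (K := K) π g, ∀ b ∈ genSubalg (K := K) π,
      a * b ∈ Drep (K := K) π g ∧ b * a ∈ Drep (K := K) π g) ∧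
    -- the `α_g` give a partial action of `G` on `A`
    Drep (K := K) π 1 = {x : B | x ∈ genSubalg (K := K) π} ∧
    (∀ a : B, actRep π 1 a = a) ∧
    (∀ g : G, Set.BijOn (actRep π g) (Drep (K := K) π g⁻¹)
      (Drep (K := K) π g)) ∧
    (∀ g : G, ∀ a ∈ Drep (K := K) π g⁻¹, ∀ b ∈ Drep (K := K) π g⁻¹,
      actRep π g (a * b) = actRep π g a * actRep π g b ∧
      actRep π g (a + b) = actRep π g a + actRep π g b) ∧
    (∀ (g : G) (k : K), ∀ a ∈ Drep (K := K) π g⁻¹,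
      actRep π g (k • a) = k • actRep π g a) ∧
    (∀ g h : G,
      (Drep (K := K) π h⁻¹ ∩ actRep π h ⁻¹'
          (Drep (K := K) π h ∩ Drep (K := K) π g⁻¹)) ⊆
        Drep (K := K) π (g * h)⁻¹) ∧
    (∀ g h : G, ∀ a ∈ Drep (K := K) π h⁻¹ ∩ actRep π h ⁻¹'
        (Drep (K := K) π h ∩ Drep (K := K) π g⁻¹),
      actRep π g (actRep π h a) = actRep π (g * h) a) := by
  refine ⟨eps_comm hone h1 h2, eps_idem hone h1, eps_swap h1 h2, ?_, ?_, ?_,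
    ?_, ?_, ?_, ?_, ?_⟩
  · rintro g a ⟨y, hy, rfl⟩ b hb
    constructor
    · exact ⟨y * b, mul_mem hy hb, by rw [mul_assoc]⟩
    · refine ⟨b * y, mul_mem hb hy, ?_⟩
      calc b * (epsOf π g * y) = (b * epsOf π g) * y := by rw [mul_assoc]
        _ = (epsOf π g * b) * y := by rw [← (commA hone h1 h2 g hb).eq]
        _ = epsOf π g * (b * y) := by rw [mul_assoc]
  · have he1 : epsOf π (1 : G) = 1 := by simp [epsOf, hone]
    ext x
    exact ⟨fun hx => Drep_subset hx, fun hx => ⟨x, hx, by rw [he1, one_mul]⟩⟩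
  · intro a; simp [actRep, hone]
  · intro g
    refine ⟨fun a ha => mapsTo_act hone h1 h2 g ha, ?_, ?_⟩
    · intro a ha b hb hab
      rw [← act_act_inv hone h1 h2 g ha, hab, act_act_inv hone h1 h2 g hb]
    · intro b hb
      have hb' : b ∈ Drep (K := K) π g⁻¹⁻¹ := by rwa [inv_inv]
      refine ⟨actRep π g⁻¹ b, mapsTo_act hone h1 h2 g⁻¹ hb', ?_⟩
      have := act_act_inv hone h1 h2 g⁻¹ hb'
      rwa [inv_inv] at this
  · intro g a ha b hb
    exact ⟨(act_mul hone h1 h2 g ha).symm, by simp [actRep, mul_add, add_mul]⟩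
  · intro g k a _
    simp [actRep, mul_smul_comm, smul_mul_assoc]
  · rintro g h a ⟨ha, hm⟩
    exact compat_mem hone h1 h2 g h ha hm.2
  · rintro g h a ⟨ha, hm⟩
    exact act_comp hone h1 h2 g h ha hm.1
end
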